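/- arXiv:1511.04545 — 4 statements merged into one kernel-verified Lean document; each statement's English description precedes it below -/
import Mathlib

section
/- Let β : ℝ → ℝ be monotone nondecreasing. Then for every ε ∈ (0,1) there exists σ ∈ (0, ε) such that β is differentiable at σ and its derivative satisfies β'(σ) ≤ 1/(σ · log(1/σ)). -/
/-!
A monotone `β` is differentiable almost everywhere and `∫ₐᵇ β' ≤ β b - β a`. If the entropy
condition failed on `(0, ε)`, then `β' > 1 / (x log (1 / x))` wherever `β'` exists there, so
`β ε - β a ≥ ∫ₐ^ε dx / (x log (1 / x)) = log (-log a) - log (-log ε)` for all `a ∈ (0, ε)`.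
The right-hand side tends to `+∞` as `a → 0⁺`, while the left-hand side stays below `β ε - β 0`.
-/

open MeasureTheory Set Filter Topology

namespace Monotone

variable {f : ℝ → ℝ}

theorem leftLim_stieltjesFunction_le (hf : Monotone f) (b : ℝ) :
    Function.leftLim hf.stieltjesFunction b ≤ f b := by
  change Function.leftLim (Function.rightLim f) b ≤ f b
  rw [leftLim_rightLim (hf.tendsto_leftLim b)]
  exact hf.leftLim_le le_rfl

theorem setLIntegral_ofReal_deriv_le (hf : Monotone f) (a b : ℝ) :
    ∫⁻ x in Ioo a b, ENNReal.ofReal (deriv f x) ≤ ENNReal.ofReal (f b - f a) := by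
  set S := hf.stieltjesFunction
  calc ∫⁻ x in Ioo a b, ENNReal.ofReal (deriv f x)
      ≤ ∫⁻ x in Ioo a b, S.measure.rnDeriv volume x :=
        lintegral_mono_ae <| ae_restrict_of_ae <| hf.ae_hasDerivAt.mono fun x hx ↦ by
          rw [hx.deriv]
          exact ENNReal.ofReal_toReal_le
    _ ≤ S.measure (Ioo a b) := Measure.setLIntegral_rnDeriv_le _
    _ = ENNReal.ofReal (Function.leftLim S b - S a) := S.measure_Ioo
    _ ≤ ENNReal.ofReal (f b - f a) := by
        gcongr
        · exact hf.leftLim_stieltjesFunction_le b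
        · exact hf.le_rightLim le_rfl

theorem setIntegral_le_sub_of_le_deriv (hf : Monotone f) {g : ℝ → ℝ} {a b : ℝ} (hab : a ≤ b)
    (hg : IntegrableOn g (Ioo a b)) (hg₀ : ∀ x ∈ Ioo a b, 0 ≤ g x)
    (hgf : ∀ x ∈ Ioo a b, DifferentiableAt ℝ f x → g x ≤ deriv f x) :
    ∫ x in Ioo a b, g x ≤ f b - f a := by
  have hle : ∀ᵐ x ∂volume.restrict (Ioo a b),
      ENNReal.ofReal (g x) ≤ ENNReal.ofReal (deriv f x) := by
    filter_upwards [ae_restrict_of_ae hf.ae_hasDerivAt, ae_restrict_mem measurableSet_Ioo]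
      with x hx hxab
    exact ENNReal.ofReal_le_ofReal (hgf x hxab hx.differentiableAt)
  rw [← ENNReal.ofReal_le_ofReal_iff (sub_nonneg.2 (hf hab)),
    ofReal_integral_eq_lintegral_ofReal hg ((ae_restrict_mem measurableSet_Ioo).mono hg₀)]
  exact (lintegral_mono_ae hle).trans (hf.setLIntegral_ofReal_deriv_le a b)

end Monotone

theorem Real.one_div_mul_log_one_div_pos {x : ℝ} (hx₀ : 0 < x) (hx₁ : x < 1) :
    0 < 1 / (x * Real.log (1 / x)) :=
  one_div_pos.2 (mul_pos hx₀ (Real.log_pos (one_lt_one_div hx₀ hx₁)))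

theorem Real.continuousOn_one_div_mul_log_one_div :
    ContinuousOn (fun x ↦ 1 / (x * Real.log (1 / x))) (Ioo 0 1) := fun x ⟨hx₀, hx₁⟩ ↦ by
  have := Real.log_pos (one_lt_one_div hx₀ hx₁)
  refine ContinuousAt.continuousWithinAt ?_
  fun_prop (disch := positivity)

theorem Real.hasDerivAt_neg_log_neg_log {x : ℝ} (hx₀ : 0 < x) (hx₁ : x < 1) :
    HasDerivAt (fun s ↦ -Real.log (-Real.log s)) (1 / (x * Real.log (1 / x))) x := by
  have hlog : Real.log x < 0 := Real.log_neg hx₀ hx₁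
  have hneg : HasDerivAt (fun s ↦ -Real.log s) (-x⁻¹) x := (Real.hasDerivAt_log hx₀.ne').neg
  refine (hneg.log (by linarith)).neg.congr_deriv ?_
  rw [one_div, one_div, Real.log_inv]
  field_simp

theorem Real.integrableOn_one_div_mul_log_one_div {a b : ℝ} (ha : 0 < a) (hb : b < 1) :
    IntegrableOn (fun x ↦ 1 / (x * Real.log (1 / x))) (Icc a b) :=
  (Real.continuousOn_one_div_mul_log_one_div.mono
    (Icc_subset_Ioo ha hb)).integrableOn_compact isCompact_Icc

theorem Real.integral_Ioo_one_div_mul_log_one_div {a b : ℝ} (ha : 0 < a) (hab : a ≤ b)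
    (hb : b < 1) :
    ∫ x in Ioo a b, 1 / (x * Real.log (1 / x)) =
      Real.log (-Real.log a) - Real.log (-Real.log b) := by
  rw [← integral_Ioc_eq_integral_Ioo, ← intervalIntegral.integral_of_le hab,
    intervalIntegral.integral_eq_sub_of_hasDerivAt (f := fun s ↦ -Real.log (-Real.log s))]
  · ring
  · rw [uIcc_of_le hab]
    exact fun x hx ↦ Real.hasDerivAt_neg_log_neg_log (ha.trans_le hx.1) (hx.2.trans_lt hb)
  · rw [intervalIntegrable_iff_integrableOn_Icc_of_le hab]
    exact Real.integrableOn_one_div_mul_log_one_div ha hb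

theorem Real.tendsto_log_neg_log_nhdsGT_zero :
    Tendsto (fun x ↦ Real.log (-Real.log x)) (𝓝[>] 0) atTop :=
  Real.tendsto_log_atTop.comp (tendsto_neg_atBot_atTop.comp Real.tendsto_log_nhdsGT_zero)

/-- For a monotone nondecreasing function `β : ℝ → ℝ`, for every `ε ∈ (0,1)` there is a
point `σ ∈ (0, ε)` at which `β` is differentiable with `β'(σ) ≤ 1/(σ log(1/σ))`
(the "entropy condition"). -/
theorem entropy_condition_exists (β : ℝ → ℝ) (hβ : Monotone β) :
    ∀ ε ∈ Set.Ioo (0 : ℝ) 1, ∃ σ ∈ Set.Ioo (0 : ℝ) ε,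
      DifferentiableAt ℝ β σ ∧ deriv β σ ≤ 1 / (σ * Real.log (1 / σ)) := by
  rintro ε ⟨hε₀, hε₁⟩
  obtain ⟨a, ha_large, ha₀, haε⟩ : ∃ a,
      β ε - β 0 + Real.log (-Real.log ε) < Real.log (-Real.log a) ∧ a ∈ Ioo 0 ε :=
    ((Real.tendsto_log_neg_log_nhdsGT_zero.eventually_gt_atTop _).and
      (Ioo_mem_nhdsGT hε₀)).exists
  by_contra! hβ'
  have hIoo : Ioo a ε ⊆ Ioo 0 1 := Ioo_subset_Ioo ha₀.le hε₁.le
  have hint := hβ.setIntegral_le_sub_of_le_deriv haε.le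
    ((Real.integrableOn_one_div_mul_log_one_div ha₀ hε₁).mono_set Ioo_subset_Icc_self)
    (fun x hx ↦ (Real.one_div_mul_log_one_div_pos (hIoo hx).1 (hIoo hx).2).le)
    (fun x hx hdiff ↦ (hβ' x ⟨ha₀.trans hx.1, hx.2⟩ hdiff).le)
  rw [Real.integral_Ioo_one_div_mul_log_one_div ha₀ haε.le hε₁] at hint
  linarith [hβ ha₀.le]
end

section
/- Let p ∈ [0,1), K ∈ ℝ and σ > 0 with 1 − 2σ²K > 0, and let f : ℝ → ℝ be twice differentiable with f''(t) + 2 f(t)³ − (2 − p²) f(t) = 0 for all t ∈ ℝ. Define k(t) = (1/σ) · √(2(1 − 2σ²K)/(2 − p²)) · f( √((1 − 2σ²K)/(2(2 − p²))) · t/σ ). Then k(t) = σ² ( 2 k''(t) + k(t)³ + 2 K k(t) ) for all t ∈ ℝ. -/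
/-! Rescaling `k(t) = a f(b t)` multiplies the second derivative by `a b²`, so the ODE of `f`
turns `2k''` into a combination of `k` and `k³`. The two constants under the square roots are
exactly those for which the `k³` terms cancel and the coefficient of `k` becomes
`1 - 2σ²K`, which the term `2Kk` then completes to `1`. -/

theorem deriv_const_mul_comp_mul {𝕜 : Type*} [NontriviallyNormedField 𝕜] (f : 𝕜 → 𝕜)
    (a b : 𝕜) : deriv (fun x => a * f (b * x)) = fun x => a * b * deriv f (b * x) := by
  funext x
  rw [deriv_const_mul_field, deriv_comp_mul_left (f := f), smul_eq_mul, mul_assoc]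

theorem deriv_deriv_const_mul_comp_mul {𝕜 : Type*} [NontriviallyNormedField 𝕜] (f : 𝕜 → 𝕜)
    (a b x : 𝕜) :
    deriv (deriv fun x => a * f (b * x)) x = a * b ^ 2 * deriv (deriv f) (b * x) := by
  rw [deriv_const_mul_comp_mul, deriv_const_mul_comp_mul]
  ring

theorem const_mul_comp_mul_solves_euler_lagrange (f : ℝ → ℝ) {q K σ a b : ℝ}
    (hode : ∀ t, deriv (deriv f) t + 2 * f t ^ 3 - q * f t = 0) (hq : q ≠ 0)
    (ha : q * σ ^ 2 * a ^ 2 = 2 * (1 - 2 * σ ^ 2 * K))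
    (hb : 2 * q * σ ^ 2 * b ^ 2 = 1 - 2 * σ ^ 2 * K) (t : ℝ) :
    a * f (b * t) = σ ^ 2 * (2 * deriv (deriv fun t => a * f (b * t)) t
      + (a * f (b * t)) ^ 3 + 2 * K * (a * f (b * t))) := by
  rw [deriv_deriv_const_mul_comp_mul]
  set F := f (b * t)
  refine mul_left_cancel₀ hq ?_
  linear_combination -(2 * q * σ ^ 2 * a * b ^ 2) * hode (b * t)
    - a * (q * F - 2 * F ^ 3) * hb - a * F ^ 3 * ha

/-- From a solution `f` of `f'' + 2 f³ − (2 − p²) f = 0`, the rescaled function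
`k(t) = (1/σ)·√(2(1−2σ²K)/(2−p²)) · f(√((1−2σ²K)/(2(2−p²))) · t/σ)` solves the
Euler–Lagrange ODE `k = σ²(2k'' + k³ + 2Kk)` of `E_σ` on a surface of constant
Gauss curvature `K`. -/
theorem euler_lagrange_constant_curvature_solution
    (p K σ : ℝ) (hp : p ∈ Set.Ico (0 : ℝ) 1) (hσ : 0 < σ)
    (hK : 0 < 1 - 2 * σ ^ 2 * K)
    (f f' f'' : ℝ → ℝ)
    (hf : ∀ t, HasDerivAt f (f' t) t) (hf' : ∀ t, HasDerivAt f' (f'' t) t)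
    (hode : ∀ t, f'' t + 2 * (f t) ^ 3 - (2 - p ^ 2) * f t = 0)
    (k : ℝ → ℝ)
    (hk : k = fun t =>
      (1 / σ) * Real.sqrt (2 * (1 - 2 * σ ^ 2 * K) / (2 - p ^ 2)) *
        f (Real.sqrt ((1 - 2 * σ ^ 2 * K) / (2 * (2 - p ^ 2))) * t / σ)) :
    ∀ t, k t = σ ^ 2 * (2 * deriv (deriv k) t + (k t) ^ 3 + 2 * K * k t) := by
  have hq : 0 < 2 - p ^ 2 := by nlinarith [hp.1, hp.2]
  have hderiv : deriv (deriv f) = f'' := by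
    rw [funext fun t => (hf t).deriv]
    exact funext fun t => (hf' t).deriv
  have hk' : k = fun t => ((1 / σ) * Real.sqrt (2 * (1 - 2 * σ ^ 2 * K) / (2 - p ^ 2))) *
      f (Real.sqrt ((1 - 2 * σ ^ 2 * K) / (2 * (2 - p ^ 2))) / σ * t) := by
    simp only [hk, mul_div_right_comm]
  rw [hk']
  refine const_mul_comp_mul_solves_euler_lagrange f (hderiv ▸ hode) hq.ne' ?_ ?_
  · rw [mul_pow, Real.sq_sqrt (by positivity)]
    field_simp
  · rw [div_pow, Real.sq_sqrt (by positivity)]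
    field_simp
end

section
/- Let 0 < σ < 1/√2 and set a = σ/√(1 − σ²), and define u : ℝ → ℝ³ by u(t) = (a cos(t/a), a sin(t/a), √(1 − a²)). Then u is a unit-speed curve on the unit sphere S² whose geodesic curvature is the constant k = √(1 − 2σ²)/σ, i.e. ‖u''(t) − ⟨u''(t), u(t)⟩u(t)‖ = √(1 − 2σ²)/σ for all t, and this constant satisfies the Euler–Lagrange identity k = σ²(k³ + 2k); hence u solves the constant-curvature Euler–Lagrange equation k = σ²(2k'' + k³ + 2Kk) of E_σ on S² (where K = 1 and k'' = 0). -/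
/-!
The curve `u` is the horizontal circle of Euclidean radius `a` at height `√(1 - a²)`,
traversed at unit speed. Its acceleration `u''` has length `1 / a` and points to the
vertical axis, so `⟨u'', u⟩ = -1` and the covariant acceleration is `u'' + u`, of squared
length `(a - 1/a)² + (1 - a²) = 1/a² - 1`. For `a = σ / √(1 - σ²)` this is
`(1 - 2σ²) / σ²`, and the Euler–Lagrange identity `k = σ²(k³ + 2k)` is the relation
`σ²k² = 1 - 2σ²`.
-/

open Real

theorem hasDerivAt_euclidean {ι : Type*} [Fintype ι] {f : ℝ → EuclideanSpace ℝ ι}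
    {f' : EuclideanSpace ℝ ι} {x : ℝ} :
    HasDerivAt f f' x ↔ ∀ i, HasDerivAt (fun t => f t i) (f' i) x := by
  constructor
  · intro h i
    exact (PiLp.proj 2 (fun _ : ι => ℝ) i).hasFDerivAt.comp_hasDerivAt x h
  · intro h
    exact (EuclideanSpace.equiv ι ℝ).symm.toContinuousLinearMap.hasFDerivAt.comp_hasDerivAt x
      (hasDerivAt_pi.2 h)

theorem EuclideanSpace.norm_vec3 (x y z : ℝ) :
    ‖!₂[x, y, z]‖ = √(x ^ 2 + y ^ 2 + z ^ 2) := by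
  simp [EuclideanSpace.norm_eq, Fin.sum_univ_three]

theorem EuclideanSpace.inner_vec3 (x y z x' y' z' : ℝ) :
    inner ℝ !₂[x, y, z] !₂[x', y', z'] = x * x' + y * y' + z * z' := by
  simp [PiLp.inner_apply, Fin.sum_univ_three]
  ring

theorem hasDerivAt_cos_div (a t : ℝ) :
    HasDerivAt (fun s => cos (s / a)) (-sin (t / a) / a) t := by
  simpa [neg_div, div_eq_mul_inv] using ((hasDerivAt_id t).div_const a).cos

theorem hasDerivAt_sin_div (a t : ℝ) :
    HasDerivAt (fun s => sin (s / a)) (cos (t / a) / a) t := by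
  simpa [div_eq_mul_inv] using ((hasDerivAt_id t).div_const a).sin

noncomputable section

/-- Projection of `u''` orthogonal to `u`: the covariant acceleration when `u` lies in the unit
sphere. -/
def sphereCovariantAccel {E : Type*} [NormedAddCommGroup E] [InnerProductSpace ℝ E]
    (u : ℝ → E) (t : ℝ) : E :=
  deriv (deriv u) t - inner ℝ (deriv (deriv u) t) (u t) • u t

def latitudeCircle (a t : ℝ) : EuclideanSpace ℝ (Fin 3) :=
  !₂[a * cos (t / a), a * sin (t / a), √(1 - a ^ 2)]

end

section LatitudeCircle

variable {a : ℝ}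

theorem deriv_latitudeCircle (ha : a ≠ 0) :
    deriv (latitudeCircle a) = fun t => !₂[-sin (t / a), cos (t / a), 0] := by
  funext t
  refine (hasDerivAt_euclidean.2 fun i => ?_).deriv
  fin_cases i
  · simpa [latitudeCircle, mul_div_cancel₀ _ ha] using (hasDerivAt_cos_div a t).const_mul a
  · simpa [latitudeCircle, mul_div_cancel₀ _ ha] using (hasDerivAt_sin_div a t).const_mul a
  · simpa [latitudeCircle] using hasDerivAt_const t _

theorem deriv_deriv_latitudeCircle (ha : a ≠ 0) :
    deriv (deriv (latitudeCircle a)) =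
      fun t => !₂[-(cos (t / a) / a), -(sin (t / a) / a), 0] := by
  rw [deriv_latitudeCircle ha]
  funext t
  refine (hasDerivAt_euclidean.2 fun i => ?_).deriv
  fin_cases i
  · simpa using (hasDerivAt_sin_div a t).fun_neg
  · simpa [neg_div] using hasDerivAt_cos_div a t
  · simpa using hasDerivAt_const t (0 : ℝ)

theorem norm_latitudeCircle (ha : a ^ 2 ≤ 1) (t : ℝ) : ‖latitudeCircle a t‖ = 1 := by
  rw [latitudeCircle, EuclideanSpace.norm_vec3, sq_sqrt (sub_nonneg.2 ha), sqrt_eq_one]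
  linear_combination a ^ 2 * cos_sq_add_sin_sq (t / a)

theorem norm_deriv_latitudeCircle (ha : a ≠ 0) (t : ℝ) :
    ‖deriv (latitudeCircle a) t‖ = 1 := by
  rw [deriv_latitudeCircle ha, EuclideanSpace.norm_vec3, sqrt_eq_one]
  linear_combination sin_sq_add_cos_sq (t / a)

theorem inner_deriv_deriv_latitudeCircle (ha : a ≠ 0) (t : ℝ) :
    inner ℝ (deriv (deriv (latitudeCircle a)) t) (latitudeCircle a t) = -1 := by
  rw [deriv_deriv_latitudeCircle ha, latitudeCircle, EuclideanSpace.inner_vec3]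
  field_simp
  linear_combination (-1) * cos_sq_add_sin_sq (t / a)

theorem sphereCovariantAccel_latitudeCircle (ha : a ≠ 0) (t : ℝ) :
    sphereCovariantAccel (latitudeCircle a) t =
      !₂[(a - 1 / a) * cos (t / a), (a - 1 / a) * sin (t / a), √(1 - a ^ 2)] := by
  rw [sphereCovariantAccel, inner_deriv_deriv_latitudeCircle ha, deriv_deriv_latitudeCircle ha,
    latitudeCircle, neg_one_smul, sub_neg_eq_add]
  ext i
  fin_cases i <;> simp only [Fin.zero_eta, Fin.mk_one, Fin.reduceFinMk, Fin.isValue, PiLp.add_apply,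
    Matrix.cons_val_zero, Matrix.cons_val_one, Matrix.cons_val] <;> ring

theorem norm_sphereCovariantAccel_latitudeCircle (ha : a ≠ 0) (ha1 : a ^ 2 ≤ 1) (t : ℝ) :
    ‖sphereCovariantAccel (latitudeCircle a) t‖ = √(1 / a ^ 2 - 1) := by
  rw [sphereCovariantAccel_latitudeCircle ha, EuclideanSpace.norm_vec3,
    sq_sqrt (sub_nonneg.2 ha1)]
  congr 1
  field_simp
  linear_combination (a ^ 2 - 1) ^ 2 * cos_sq_add_sin_sq (t / a)

end LatitudeCircle

/-- For `0 < σ < 1/√2` and `a = σ/√(1 − σ²)`, the unit-speed latitude circle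
`u(t) = (a cos(t/a), a sin(t/a), √(1 − a²))` lies on the unit sphere, has constant
geodesic curvature `k = √(1 − 2σ²)/σ`, and this constant satisfies the
Euler–Lagrange identity `k = σ²(k³ + 2k)` (hence `u` solves the constant-curvature
Euler–Lagrange equation of `E_σ` on `S²`, where `K = 1` and `k'' = 0`). -/
theorem latitude_circle_is_critical_point (σ : ℝ) (hσ : 0 < σ)
    (hσ' : σ < 1 / Real.sqrt 2) (a : ℝ) (ha : a = σ / Real.sqrt (1 - σ ^ 2))
    (u : ℝ → EuclideanSpace ℝ (Fin 3))
    (hu : u = fun t => WithLp.toLp 2 ![a * Real.cos (t / a), a * Real.sin (t / a),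
      Real.sqrt (1 - a ^ 2)])
    (k : ℝ) (hk : k = Real.sqrt (1 - 2 * σ ^ 2) / σ) :
    (∀ t : ℝ, ‖u t‖ = 1) ∧ (∀ t : ℝ, ‖deriv u t‖ = 1) ∧
      (∀ t : ℝ,
        ‖deriv (deriv u) t - (inner ℝ (deriv (deriv u) t) (u t) : ℝ) • u t‖ = k) ∧
      k = σ ^ 2 * (k ^ 3 + 2 * k) := by
  have hσ2 : 2 * σ ^ 2 < 1 := by
    have h := pow_lt_one₀ (by positivity) ((lt_div_iff₀ (by positivity)).1 hσ') two_ne_zero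
    rwa [mul_pow, sq_sqrt zero_le_two, mul_comm] at h
  have ha2 : a ^ 2 = σ ^ 2 / (1 - σ ^ 2) := by
    rw [ha, div_pow, sq_sqrt (by nlinarith)]
  have ha0 : a ≠ 0 := by
    rw [ha]
    exact (div_pos hσ (sqrt_pos.2 (by nlinarith))).ne'
  have ha1 : a ^ 2 ≤ 1 := by
    rw [ha2, div_le_one (by nlinarith)]
    nlinarith
  have hcurv : √(1 / a ^ 2 - 1) = k := by
    have : 1 / a ^ 2 - 1 = (1 - 2 * σ ^ 2) / σ ^ 2 := by
      rw [ha2]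
      field_simp
      ring
    rw [this, sqrt_div' _ (sq_nonneg σ), sqrt_sq hσ.le, hk]
  have hk2 : σ ^ 2 * k ^ 2 = 1 - 2 * σ ^ 2 := by
    rw [hk, div_pow, sq_sqrt (by linarith)]
    field_simp
  subst hu
  exact ⟨norm_latitudeCircle ha1, norm_deriv_latitudeCircle ha0,
    fun t => hcurv ▸ norm_sphereCovariantAccel_latitudeCircle ha0 ha1 t,
    by linear_combination (-k) * hk2⟩
end

section
/- Let p : ℂ × ℂ → ℝ × ℂ be the Hopf map p(w,z) = (|w|² − |z|², 2 w z̄), with the Euclidean norm ‖(x,ζ)‖ = √(x² + |ζ|²) on ℝ × ℂ. Let Γ = (Γ₁, Γ₂) : ℝ → ℂ² be differentiable with |Γ₁(t)|² + |Γ₂(t)|² = 1 for all t and horizontal, i.e. the complex Hermitian inner product vanishes: Γ₁(t)·conj(Γ₁'(t)) + Γ₂(t)·conj(Γ₂'(t)) = 0 for all t. Then the projected curve γ = p ∘ Γ satisfies ‖γ'(t)‖ = 2 ‖Γ'(t)‖ for all t. -/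
/-! Write `v = s x + r (i x) + h` with `h` Hermitian-orthogonal to `x`. The differential of the
Hopf map at `x` sends the fibre direction `i x` to `0`, and sends `x` and `h` to orthogonal vectors
of lengths `2 ‖x‖²` and `2 ‖x‖ ‖h‖`. Hence `‖dpₓ v‖² = 4 (‖x‖² ‖v‖² - (Im ⟨x, v⟩)²)` for all
`x, v ∈ ℂ²`, which is `4 ‖v‖²` on a horizontal curve in `S³`. -/

open ComplexConjugate

theorem hopf_differential_norm_sq (a b p q : ℂ) :
    (2 * inner ℝ a p - 2 * inner ℝ b q) ^ 2 + ‖2 * p * conj b + 2 * a * conj q‖ ^ 2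
      = 4 * ((‖a‖ ^ 2 + ‖b‖ ^ 2) * (‖p‖ ^ 2 + ‖q‖ ^ 2) - (a * conj p + b * conj q).im ^ 2) := by
  simp only [Complex.inner, Complex.sq_norm, Complex.normSq_apply, Complex.add_re,
    Complex.add_im, Complex.mul_re, Complex.mul_im, Complex.conj_re, Complex.conj_im,
    Complex.re_ofNat, Complex.im_ofNat]
  ring

theorem hopf_curve_speed_sq {Γ₁ Γ₂ : ℝ → ℂ} {p q : ℂ} {t : ℝ}
    (hΓ₁ : HasDerivAt Γ₁ p t) (hΓ₂ : HasDerivAt Γ₂ q t) :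
    deriv (fun s => ‖Γ₁ s‖ ^ 2 - ‖Γ₂ s‖ ^ 2) t ^ 2
        + ‖deriv (fun s => 2 * Γ₁ s * conj (Γ₂ s)) t‖ ^ 2
      = 4 * ((‖Γ₁ t‖ ^ 2 + ‖Γ₂ t‖ ^ 2) * (‖p‖ ^ 2 + ‖q‖ ^ 2)
          - (Γ₁ t * conj p + Γ₂ t * conj q).im ^ 2) := by
  have hγ₁ : HasDerivAt (fun s => ‖Γ₁ s‖ ^ 2 - ‖Γ₂ s‖ ^ 2)
      (2 * inner ℝ (Γ₁ t) p - 2 * inner ℝ (Γ₂ t) q) t :=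
    hΓ₁.norm_sq.sub hΓ₂.norm_sq
  have hγ₂ : HasDerivAt (fun s => 2 * Γ₁ s * conj (Γ₂ s))
      (2 * p * conj (Γ₂ t) + 2 * Γ₁ t * conj q) t :=
    (hΓ₁.const_mul 2).mul hΓ₂.star
  rw [hγ₁.deriv, hγ₂.deriv]
  exact hopf_differential_norm_sq _ _ _ _

/-- If `Γ = (Γ₁, Γ₂) : ℝ → ℂ²` is a differentiable curve on `S³` (i.e.
`|Γ₁|² + |Γ₂|² = 1`) which is horizontal for the Hopf fibration
(`Γ₁ conj(Γ₁') + Γ₂ conj(Γ₂') = 0`), then the projected curve `γ = p ∘ Γ` under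
the Hopf map `p(w,z) = (|w|² − |z|², 2wz̄)` satisfies `‖γ'(t)‖ = 2‖Γ'(t)‖` for
the Euclidean norms on `ℝ × ℂ` and `ℂ²`. -/
theorem hopf_projection_doubles_speed
    (Γ₁ Γ₂ Γ₁' Γ₂' : ℝ → ℂ)
    (hΓ₁ : ∀ t, HasDerivAt Γ₁ (Γ₁' t) t)
    (hΓ₂ : ∀ t, HasDerivAt Γ₂ (Γ₂' t) t)
    (hsphere : ∀ t, ‖Γ₁ t‖ ^ 2 + ‖Γ₂ t‖ ^ 2 = 1)
    (hhoriz : ∀ t,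
      Γ₁ t * starRingEnd ℂ (Γ₁' t) + Γ₂ t * starRingEnd ℂ (Γ₂' t) = 0)
    (γ₁ : ℝ → ℝ) (γ₂ : ℝ → ℂ)
    (hγ₁ : γ₁ = fun t => ‖Γ₁ t‖ ^ 2 - ‖Γ₂ t‖ ^ 2)
    (hγ₂ : γ₂ = fun t => 2 * Γ₁ t * starRingEnd ℂ (Γ₂ t)) :
    ∀ t : ℝ,
      Real.sqrt (deriv γ₁ t ^ 2 + ‖deriv γ₂ t‖ ^ 2)
        = 2 * Real.sqrt (‖Γ₁' t‖ ^ 2 + ‖Γ₂' t‖ ^ 2) := by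
  intro t
  subst hγ₁ hγ₂
  have hspeed : deriv (fun s => ‖Γ₁ s‖ ^ 2 - ‖Γ₂ s‖ ^ 2) t ^ 2
      + ‖deriv (fun s => 2 * Γ₁ s * conj (Γ₂ s)) t‖ ^ 2
        = 2 ^ 2 * (‖Γ₁' t‖ ^ 2 + ‖Γ₂' t‖ ^ 2) := by
    rw [hopf_curve_speed_sq (hΓ₁ t) (hΓ₂ t), hsphere t, hhoriz t]
    norm_num
  rw [hspeed, Real.sqrt_mul (by positivity), Real.sqrt_sq zero_le_two]
end
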